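/- Fix ι ∈ {identity, complex conjugation} on ℂ and ε ∈ {1,−1}. Let V be an isotypical H-module of type π equipped with an H-invariant nondegenerate (ι,ε)-symmetric form B, and suppose π itself admits an H-invariant nondegenerate (ι,ε)-symmetric form b. Then, writing V ≅ π^{⊕r}, there exists an invertible real diagonal r×r matrix D = diag(d_1,…,d_r) such that (V,B) is H-equivariantly isometric to the B-orthogonal direct sum of the modules (π, d_i·b), i = 1,…,r; equivalently, (V,B) ≅ (π ⊗ ℂ^r, b ⊗ D). -/

import Mathlib

variable {H V P : Type*}

/-- `U` is invariant under the representation `ρ`. -/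
def Invt [Group H] [AddCommGroup V] [Module ℂ V] (ρ : Representation ℂ H V)
    (U : Submodule ℂ V) : Prop :=
  ∀ (h : H) (v : V), v ∈ U → ρ h v ∈ U

/-- `V` is a semisimple `H`-module. -/
def Semisimple [Group H] [AddCommGroup V] [Module ℂ V] (ρ : Representation ℂ H V) : Prop :=
  ∀ U : Submodule ℂ V, Invt ρ U → ∃ U', Invt ρ U' ∧ IsCompl U U'

/-- `U` is an irreducible invariant subspace. -/
def IrredSub [Group H] [AddCommGroup V] [Module ℂ V] (ρ : Representation ℂ H V)
    (U : Submodule ℂ V) : Prop :=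
  Invt ρ U ∧ U ≠ ⊥ ∧ ∀ U' ≤ U, Invt ρ U' → U' = ⊥ ∨ U' = U

/-- The invariant subspace `U ⊆ V` is isomorphic, as an `H`-module, to the external
`H`-module `P`. -/
def RepIsoExt [Group H] [AddCommGroup V] [Module ℂ V] [AddCommGroup P] [Module ℂ P]
    (ρ : Representation ℂ H V) (ρP : Representation ℂ H P) (U : Submodule ℂ V) : Prop :=
  ∃ e : U ≃ₗ[ℂ] P, ∀ (h : H) (v : V) (hv : v ∈ U) (hv' : ρ h v ∈ U),
    e ⟨ρ h v, hv'⟩ = ρP h (e ⟨v, hv⟩)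

open Module

/-! The proof is an induction on `dim V`. Because `V` is isotypical and semisimple, it is spanned
by the images of the `H`-maps `π → V`, so the nondegenerate form `B` pairs two such images
nontrivially. Schur's lemma says that every invariant form on the irreducible `π` is a multiple
of `b`; hence `B (f ·) (g ·) = c • b` for all `H`-maps `f, g`, and a polarization `f ± ι(c) g`
produces an `H`-map `f` with `B (f ·) (f ·) = c • b`, `c ≠ 0`. The `(ι,ε)`-symmetry of `B` and
`b` forces `ι c = c`, so after rescaling `f` the constant `c` is real. Then `V` is the
orthogonal sum of the copy `f(π)` and its orthogonal complement, which is again isotypical with a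
nondegenerate invariant form, and the induction hypothesis applies to it. -/

section Involution

variable {σ : ℂ →+* ℂ}

lemma apply_apply_of_eq_id_or_conj (hσ : σ = RingHom.id ℂ ∨ σ = starRingEnd ℂ) (z : ℂ) :
    σ (σ z) = z := by
  rcases hσ with rfl | rfl <;> simp

lemma apply_ofReal_of_eq_id_or_conj (hσ : σ = RingHom.id ℂ ∨ σ = starRingEnd ℂ) (r : ℝ) :
    σ r = r := by
  rcases hσ with rfl | rfl <;> simp

lemma exists_apply_mul_self_mul_eq_ofReal (hσ : σ = RingHom.id ℂ ∨ σ = starRingEnd ℂ)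
    {c : ℂ} (hc : c ≠ 0) (hσc : σ c = c) : ∃ (t : ℂ) (d : ℝ), d ≠ 0 ∧ σ t * t * c = d := by
  rcases hσ with rfl | rfl
  · obtain ⟨t, ht⟩ := IsAlgClosed.exists_eq_mul_self c⁻¹
    exact ⟨t, 1, one_ne_zero, by simp [← ht, hc]⟩
  · refine ⟨1, c.re, fun h => hc ?_, ?_⟩
    · rw [← Complex.conj_eq_iff_re.mp hσc, h, Complex.ofReal_zero]
    · simpa using (Complex.conj_eq_iff_re.mp hσc).symm

end Involution

section SemilinearForm

variable [AddCommGroup V] [Module ℂ V] [FiniteDimensional ℂ V] {σ : ℂ →+* ℂ}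

theorem LinearMap.SeparatingLeft.bijective (hσ : σ = RingHom.id ℂ ∨ σ = starRingEnd ℂ)
    {B : V →ₛₗ[σ] V →ₗ[ℂ] ℂ} (hB : B.SeparatingLeft) : Function.Bijective B := by
  let Bℝ : V →ₗ[ℝ] Dual ℂ V :=
    { toFun := B
      map_add' := B.map_add
      map_smul' := fun r v => by
        simpa [apply_ofReal_of_eq_id_or_conj hσ, Complex.coe_smul] using B.map_smulₛₗ (r : ℂ) v }
  have hinj : Function.Injective B :=
    LinearMap.ker_eq_bot.mp (LinearMap.separatingLeft_iff_ker_eq_bot.mp hB)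
  have hrank : finrank ℝ V = finrank ℝ (Dual ℂ V) := by
    rw [finrank_real_of_complex, finrank_real_of_complex, Subspace.dual_finrank_eq]
  exact ⟨hinj, (LinearMap.injective_iff_surjective_of_finrank_eq_finrank (f := Bℝ) hrank).mp hinj⟩

end SemilinearForm

theorem isCompl_range_ker_of_bijective_comp {R S M N D : Type*} [Ring R] [Ring S]
    [AddCommGroup M] [Module R M] [AddCommGroup N] [Module R N] [AddCommGroup D] [Module S D]
    {τ : R →+* S} (f : N →ₗ[R] M) (g : M →ₛₗ[τ] D) (h : Function.Bijective (g ∘ f)) :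
    IsCompl (LinearMap.range f) (LinearMap.ker g) := by
  refine ⟨Submodule.disjoint_def.mpr ?_, Submodule.codisjoint_iff_exists_add_eq.mpr fun v => ?_⟩
  · rintro _ ⟨p, rfl⟩ hp
    have : p = 0 := h.1 (by simpa using hp)
    simp [this]
  · obtain ⟨p, hp⟩ := h.2 (g v)
    exact ⟨f p, v - f p, ⟨p, rfl⟩, by simpa [sub_eq_zero] using hp.symm, add_sub_cancel _ _⟩

theorem finrank_lt_of_isCompl_range {K M N : Type*} [DivisionRing K] [AddCommGroup M] [Module K M]
    [FiniteDimensional K M] [AddCommGroup N] [Module K N] [Nontrivial N] {f : N →ₗ[K] M}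
    (hf : Function.Injective f) {W : Submodule K M} (hfW : IsCompl (LinearMap.range f) W) :
    finrank K W < finrank K M := by
  have := FiniteDimensional.of_injective f hf
  rw [← Submodule.finrank_add_eq_of_isCompl hfW, LinearMap.finrank_range_of_inj hf]
  exact Nat.lt_add_of_pos_left finrank_pos

section Forms

variable [Group H] [AddCommGroup V] [Module ℂ V] [AddCommGroup P] [Module ℂ P] {σ : ℂ →+* ℂ}

def IsInvariantForm (ρ : Representation ℂ H V) (B : V →ₛₗ[σ] V →ₗ[ℂ] ℂ) : Prop :=
  ∀ h v w, B (ρ h v) (ρ h w) = B v w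

def IsEpsSymmetric (ε : ℂ) (B : V →ₛₗ[σ] V →ₗ[ℂ] ℂ) : Prop :=
  ∀ v w, B w v = ε * σ (B v w)

structure IsInvariantEpsForm (ρ : Representation ℂ H V) (ε : ℂ) (B : V →ₛₗ[σ] V →ₗ[ℂ] ℂ) :
    Prop where
  separatingLeft : B.SeparatingLeft
  invariant : IsInvariantForm ρ B
  eps_symm : IsEpsSymmetric ε B

def HasDiagonalModel (ρ : Representation ℂ H V) (ρP : Representation ℂ H P)
    (B : V →ₛₗ[σ] V →ₗ[ℂ] ℂ) (b : P →ₛₗ[σ] P →ₗ[ℂ] ℂ) : Prop :=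
  ∃ (r : ℕ) (d : Fin r → ℝ), (∀ i, d i ≠ 0) ∧
    ∃ Φ : V ≃ₗ[ℂ] (Fin r → P),
      (∀ (h : H) (v : V) (i : Fin r), Φ (ρ h v) i = ρP h (Φ v i)) ∧
      (∀ v w : V, B v w = ∑ i, (d i : ℂ) * b (Φ v i) (Φ w i))

variable {ε : ℂ} {ρ : Representation ℂ H V} {ρP : Representation ℂ H P}
  {B : V →ₛₗ[σ] V →ₗ[ℂ] ℂ} {b : P →ₛₗ[σ] P →ₗ[ℂ] ℂ}

lemma IsInvariantForm.apply_rep_left (hB : IsInvariantForm ρ B) (h : H) (v w : V) :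
    B (ρ h v) w = B v (ρ h⁻¹ w) := by
  rw [← hB h v (ρ h⁻¹ w), Representation.self_inv_apply]

theorem exists_eq_smul_of_commute [FiniteDimensional ℂ P] [Nontrivial P]
    (hP : ∀ U, Invt ρP U → U = ⊥ ∨ U = ⊤) (T : P →ₗ[ℂ] P)
    (hT : ∀ h p, T (ρP h p) = ρP h (T p)) : ∃ c : ℂ, ∀ p, T p = c • p := by
  obtain ⟨c, hc⟩ := Module.End.exists_eigenvalue T
  have hinv : Invt ρP (Module.End.eigenspace T c) := fun h p hp => by
    rw [Module.End.mem_eigenspace_iff] at hp ⊢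
    rw [hT, hp, map_smul]
  refine ⟨c, fun p => Module.End.mem_eigenspace_iff.mp ?_⟩
  rw [(hP _ hinv).resolve_left (Module.End.hasEigenvalue_iff.mp hc)]
  exact Submodule.mem_top

theorem exists_eq_mul_of_isInvariantForm [FiniteDimensional ℂ P]
    (hσ : σ = RingHom.id ℂ ∨ σ = starRingEnd ℂ) (hP : ∀ U, Invt ρP U → U = ⊥ ∨ U = ⊤)
    (hb : b.SeparatingLeft) (hbinv : IsInvariantForm ρP b) {β : P →ₛₗ[σ] P →ₗ[ℂ] ℂ}
    (hβinv : IsInvariantForm ρP β) :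
    ∃ c : ℂ, ∀ p q, β p q = c * b p q := by
  rcases subsingleton_or_nontrivial P with _ | _
  · exact ⟨0, fun p q => by simp [Subsingleton.elim p 0]⟩
  obtain ⟨hbinj, hbsurj⟩ := hb.bijective hσ
  choose T hT using fun p => hbsurj (β p)
  let Tₗ : P →ₗ[ℂ] P :=
    { toFun := T
      map_add' := fun p p' => hbinj (by simp [hT])
      map_smul' := fun a p => hbinj (by simp [hT]) }
  have hTcomm : ∀ h p, Tₗ (ρP h p) = ρP h (Tₗ p) := fun h p => hbinj <| LinearMap.ext fun q => by
    change b (T _) q = _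
    rw [hT, hβinv.apply_rep_left, hbinv.apply_rep_left]
    exact LinearMap.congr_fun (hT p).symm _
  obtain ⟨c, hc⟩ := exists_eq_smul_of_commute hP Tₗ hTcomm
  refine ⟨σ c, fun p q => ?_⟩
  rw [← hT]
  change b (Tₗ p) q = _
  rw [hc, map_smulₛₗ]
  rfl

theorem exists_pullback_eq_mul [FiniteDimensional ℂ P]
    (hσ : σ = RingHom.id ℂ ∨ σ = starRingEnd ℂ) (hP : ∀ U, Invt ρP U → U = ⊥ ∨ U = ⊤)
    (hb : b.SeparatingLeft) (hbinv : IsInvariantForm ρP b) (hBinv : IsInvariantForm ρ B)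
    (f g : ρP.IntertwiningMap ρ) : ∃ c : ℂ, ∀ p q, B (f p) (g q) = c * b p q :=
  exists_eq_mul_of_isInvariantForm hσ hP hb hbinv
    (β := (B.comp f.toLinearMap).compl₂ g.toLinearMap)
    fun h p q => by simp [Representation.IntertwiningMap.isIntertwining, hBinv h]

lemma pullback_swap (hσ : σ = RingHom.id ℂ ∨ σ = starRingEnd ℂ) (hε : ε = 1 ∨ ε = -1)
    (hBsym : IsEpsSymmetric ε B) (hbsym : IsEpsSymmetric ε b) {f g : P → V} {c : ℂ}
    (hfg : ∀ p q, B (f p) (g q) = c * b p q) (p q : P) : B (g p) (f q) = σ c * b p q := by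
  have hεε : ε * ε = 1 := by rcases hε with rfl | rfl <;> norm_num
  have hσε : σ ε = ε := by rcases hε with rfl | rfl <;> simp
  rw [hBsym, hfg, map_mul, hbsym p q, map_mul, hσε, apply_apply_of_eq_id_or_conj hσ]
  linear_combination (σ c * b p q) * hεε

theorem exists_pullback_pair_ne_zero [Nontrivial V]
    (hgen : ⨆ f : ρP.IntertwiningMap ρ, LinearMap.range f.toLinearMap = ⊤)
    (hB : B.SeparatingLeft) : ∃ (f g : ρP.IntertwiningMap ρ) (p q : P), B (f p) (g q) ≠ 0 := by
  by_contra! h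
  have hspan : Submodule.span ℂ (⋃ f : ρP.IntertwiningMap ρ, Set.range f) = ⊤ := by
    rw [← hgen, Submodule.iSup_eq_span]
    simp only [LinearMap.coe_range, Representation.IntertwiningMap.coe_toLinearMap]
  have hB0 : B = 0 := by
    refine LinearMap.ext_on hspan fun x hx => LinearMap.ext_on hspan fun y hy => ?_
    obtain ⟨f, p, rfl⟩ := Set.mem_iUnion.mp hx
    obtain ⟨g, q, rfl⟩ := Set.mem_iUnion.mp hy
    simpa using h f g p q
  obtain ⟨v, hv⟩ := exists_ne (0 : V)
  exact hv (hB v fun w => by simp [hB0])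

theorem exists_pullback_self_ne_zero [Nontrivial V] [FiniteDimensional ℂ P]
    (hσ : σ = RingHom.id ℂ ∨ σ = starRingEnd ℂ) (hε : ε = 1 ∨ ε = -1)
    (hP : ∀ U, Invt ρP U → U = ⊥ ∨ U = ⊤) (hb : IsInvariantEpsForm ρP ε b)
    (hgen : ⨆ f : ρP.IntertwiningMap ρ, LinearMap.range f.toLinearMap = ⊤)
    (hB : IsInvariantEpsForm ρ ε B) :
    ∃ (f : ρP.IntertwiningMap ρ) (p q : P), B (f p) (f q) ≠ 0 := by
  obtain ⟨f, g, p, q, hfg⟩ := exists_pullback_pair_ne_zero hgen hB.separatingLeft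
  obtain ⟨c, hc⟩ := exists_pullback_eq_mul hσ hP hb.separatingLeft hb.invariant hB.invariant f g
  have hgf := pullback_swap hσ hε hB.eps_symm hb.eps_symm hc
  have hpolar : ∀ s : ℂ, B ((f + s • g) p) ((f + s • g) q) =
      B (f p) (f q) + (s * c + σ s * σ c) * b p q + σ s * s * B (g p) (g q) := fun s => by
    simp only [Representation.IntertwiningMap.coe_add, Representation.IntertwiningMap.coe_smul,
      Pi.add_apply, Pi.smul_apply, map_add, map_smulₛₗ, LinearMap.add_apply,
      LinearMap.smul_apply, smul_eq_mul, RingHom.id_apply, hc, hgf]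
    ring
  by_contra! h
  have hplus := hpolar (σ c)
  have hminus := hpolar (-σ c)
  simp only [h, map_neg, apply_apply_of_eq_id_or_conj hσ] at hplus hminus
  -- the two expansions differ by `4 c σ(c) b p q`
  have hcc : c * σ c * b p q = 0 := by linear_combination (hminus - hplus) / 4
  apply hfg
  rw [hc]
  rcases mul_eq_zero.mp hcc with hc0 | hb0
  · rcases mul_eq_zero.mp hc0 with hc0 | hσc0
    · rw [hc0, zero_mul]
    · rw [← apply_apply_of_eq_id_or_conj hσ c, hσc0, map_zero, zero_mul]
  · rw [hb0, mul_zero]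

theorem exists_pullback_self_eq_ofReal [Nontrivial V] [FiniteDimensional ℂ P]
    (hσ : σ = RingHom.id ℂ ∨ σ = starRingEnd ℂ) (hε : ε = 1 ∨ ε = -1)
    (hP : ∀ U, Invt ρP U → U = ⊥ ∨ U = ⊤) (hb : IsInvariantEpsForm ρP ε b)
    (hgen : ⨆ f : ρP.IntertwiningMap ρ, LinearMap.range f.toLinearMap = ⊤)
    (hB : IsInvariantEpsForm ρ ε B) :
    ∃ (f : ρP.IntertwiningMap ρ) (d : ℝ), d ≠ 0 ∧ ∀ p q, B (f p) (f q) = d * b p q := by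
  obtain ⟨f, p, q, hpq⟩ := exists_pullback_self_ne_zero hσ hε hP hb hgen hB
  obtain ⟨c, hc⟩ := exists_pullback_eq_mul hσ hP hb.separatingLeft hb.invariant hB.invariant f f
  have hc0 : c ≠ 0 := fun h => hpq (by rw [hc, h, zero_mul])
  have hbpq : b p q ≠ 0 := fun h => hpq (by rw [hc, h, mul_zero])
  have hσc : σ c = c := mul_right_cancel₀ hbpq <| by
    rw [← pullback_swap hσ hε hB.eps_symm hb.eps_symm hc, hc]
  obtain ⟨t, d, hd, htc⟩ := exists_apply_mul_self_mul_eq_ofReal hσ hc0 hσc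
  refine ⟨t • f, d, hd, fun p q => ?_⟩
  simp only [Representation.IntertwiningMap.smul_apply, map_smulₛₗ, LinearMap.smul_apply,
    smul_eq_mul, RingHom.id_apply, hc, ← htc]
  ring

lemma projectionOnto_apply_rep (W : Subrepresentation ρ) {p : Submodule ℂ V} (hp : Invt ρ p)
    (hWp : IsCompl W.toSubmodule p) (h : H) (v : V) :
    W.toSubmodule.projectionOnto p hWp (ρ h v) =
      W.toRepresentation h (W.toSubmodule.projectionOnto p hWp v) := by
  apply Subtype.ext
  change W.toSubmodule.projection p hWp (ρ h v) = ρ h (W.toSubmodule.projection p hWp v)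
  conv_lhs => rw [← Submodule.projection_add_projection_eq_self hWp v]
  rw [map_add, map_add,
    Submodule.projection_apply_of_mem_left hWp
      (W.apply_mem_toSubmodule h (Submodule.projection_apply_mem hWp v)),
    Submodule.projection_apply_of_mem_right hWp (hp h _ (Submodule.projection_apply_mem _ v)),
    add_zero]

theorem iSup_range_intertwiningMap_eq_top_of_isCompl
    (hgen : ⨆ f : ρP.IntertwiningMap ρ, LinearMap.range f.toLinearMap = ⊤)
    (W : Subrepresentation ρ) {p : Submodule ℂ V} (hp : Invt ρ p)
    (hWp : IsCompl W.toSubmodule p) :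
    ⨆ f : ρP.IntertwiningMap W.toRepresentation, LinearMap.range f.toLinearMap = ⊤ := by
  let π : ρ.IntertwiningMap W.toRepresentation :=
    (W.toSubmodule.projectionOnto p hWp).intertwiningMap_of_isIntertwiningMap _ _
      (projectionOnto_apply_rep W hp hWp)
  refine eq_top_iff.mpr ?_
  calc ⊤ = (⨆ f : ρP.IntertwiningMap ρ, LinearMap.range f.toLinearMap).map π.toLinearMap := by
        rw [hgen, Submodule.map_top, eq_comm, LinearMap.range_eq_top]
        exact Submodule.projectionOnto_surjective hWp
    _ ≤ _ := by
        rw [Submodule.map_iSup]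
        refine iSup_le fun f => le_iSup_of_le (π.comp f) ?_
        rw [← LinearMap.range_comp]
        rfl

def leftOrthogonal (hB : IsInvariantForm ρ B) (f : ρP.IntertwiningMap ρ) :
    Subrepresentation ρ where
  toSubmodule := LinearMap.ker (B.compl₂ f.toLinearMap)
  apply_mem_toSubmodule h v hv := by
    ext p
    simpa [hB.apply_rep_left, ← f.isIntertwining] using LinearMap.congr_fun hv (ρP h⁻¹ p)

lemma mem_leftOrthogonal {hB : IsInvariantForm ρ B} {f : ρP.IntertwiningMap ρ} {v : V} :
    v ∈ (leftOrthogonal hB f).toSubmodule ↔ ∀ p, B v (f p) = 0 := by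
  simp [leftOrthogonal, LinearMap.ext_iff]

lemma injective_of_pullback_eq_mul (hb : b.SeparatingLeft) {f : P →ₗ[ℂ] V} {c : ℂ}
    (hc : c ≠ 0) (hfB : ∀ p q, B (f p) (f q) = c * b p q) :
    Function.Injective f :=
  (injective_iff_map_eq_zero f).mpr fun p hp => hb p fun q => by
    simpa [hp, hc] using (hfB p q).symm

theorem isCompl_range_ker_compl₂ [FiniteDimensional ℂ P]
    (hσ : σ = RingHom.id ℂ ∨ σ = starRingEnd ℂ) (hb : b.SeparatingLeft) {f : P →ₗ[ℂ] V}
    {c : ℂ} (hc : c ≠ 0) (hfB : ∀ p q, B (f p) (f q) = c * b p q) :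
    IsCompl (LinearMap.range f) (LinearMap.ker (B.compl₂ f)) := by
  refine isCompl_range_ker_of_bijective_comp f _ ?_
  have : B.compl₂ f ∘ f = (Units.mk0 c hc • ·) ∘ b := by
    funext p
    ext q
    simp [hfB]
  rw [this]
  exact (MulAction.bijective _).comp (hb.bijective hσ)

lemma separatingLeft_domRestrict₁₂ (hB : B.SeparatingLeft) {U W : Submodule ℂ V}
    (hUW : IsCompl U W) (hWU : ∀ w ∈ W, ∀ u ∈ U, B w u = 0) :
    (B.domRestrict₁₂ W W).SeparatingLeft := fun w hw => by
  refine Subtype.ext (hB w fun v => ?_)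
  obtain ⟨u, hu, w', hw', rfl⟩ :=
    Submodule.mem_sup.mp (hUW.codisjoint.eq_top ▸ Submodule.mem_top : v ∈ U ⊔ W)
  rw [map_add, hWU w w.2 u hu, zero_add]
  exact hw ⟨w', hw'⟩

theorem HasDiagonalModel.of_subsingleton [Subsingleton V] : HasDiagonalModel ρ ρP B b :=
  ⟨0, finZeroElim, finZeroElim, LinearEquiv.ofSubsingleton _ _, fun _ _ => finZeroElim,
    fun v w => by simp [Subsingleton.elim v 0]⟩

theorem HasDiagonalModel.of_isCompl {f : ρP.IntertwiningMap ρ} (hf : Function.Injective f)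
    {d : ℝ} (hd : d ≠ 0) (hfB : ∀ p q, B (f p) (f q) = d * b p q) {W : Subrepresentation ρ}
    (hfW : IsCompl (LinearMap.range f.toLinearMap) W.toSubmodule)
    (hBfW : ∀ p, ∀ w ∈ W.toSubmodule, B (f p) w = 0)
    (hBWf : ∀ p, ∀ w ∈ W.toSubmodule, B w (f p) = 0)
    (hW : HasDiagonalModel W.toRepresentation ρP
      (B.domRestrict₁₂ W.toSubmodule W.toSubmodule) b) :
    HasDiagonalModel ρ ρP B b := by
  obtain ⟨r, d', hd', Φ, hΦρ, hΦB⟩ := hW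
  let Ψ : (Fin (r + 1) → P) ≃ₗ[ℂ] V :=
    (Fin.consLinearEquiv ℂ fun _ => P).symm ≪≫ₗ
      ((LinearEquiv.ofInjective f.toLinearMap hf).prodCongr Φ.symm) ≪≫ₗ
      Submodule.prodEquivOfIsCompl _ _ hfW
  have hΨ : ∀ x, Ψ x = f (x 0) + Φ.symm (Fin.tail x) := fun x => rfl
  have hΦsymm : ∀ h (y : Fin r → P),
      (Φ.symm fun i => ρP h (y i)) = ρ h (Φ.symm y : V) := fun h y => by
    suffices Φ.symm (fun i => ρP h (y i)) = W.toRepresentation h (Φ.symm y) from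
      congrArg Subtype.val this
    rw [LinearEquiv.symm_apply_eq]
    funext i
    rw [hΦρ, LinearEquiv.apply_symm_apply]
  refine ⟨r + 1, Fin.cons d d', Fin.cases hd hd', Ψ.symm, fun h v i => ?_, fun v w => ?_⟩
  · obtain ⟨x, rfl⟩ := Ψ.surjective v
    suffices Ψ.symm (ρ h (Ψ x)) = fun i => ρP h (x i) by simp [this]
    rw [LinearEquiv.symm_apply_eq, hΨ, hΨ, map_add, ← f.isIntertwining, ← hΦsymm]
    rfl
  · obtain ⟨x, rfl⟩ := Ψ.surjective v
    obtain ⟨y, rfl⟩ := Ψ.surjective w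
    have hΦ := hΦB (Φ.symm (Fin.tail x)) (Φ.symm (Fin.tail y))
    simp only [LinearMap.domRestrict₁₂_apply, LinearEquiv.apply_symm_apply] at hΦ
    rw [Ψ.symm_apply_apply, Ψ.symm_apply_apply, hΨ, hΨ]
    simp only [map_add, LinearMap.add_apply, hfB, hΦ,
      hBfW _ _ (Φ.symm _).2, hBWf _ _ (Φ.symm _).2, Fin.sum_univ_succ, Fin.cons_zero,
      Fin.cons_succ, Fin.tail, add_zero, zero_add]

lemma exists_irredSub_le [FiniteDimensional ℂ V] {S : Submodule ℂ V} (hS : Invt ρ S)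
    (hS0 : S ≠ ⊥) : ∃ U ≤ S, IrredSub ρ U := by
  obtain ⟨U, ⟨hUS, hU, hU0⟩, hmin⟩ :=
    wellFounded_lt.has_min {U | U ≤ S ∧ Invt ρ U ∧ U ≠ ⊥} ⟨S, le_rfl, hS, hS0⟩
  refine ⟨U, hUS, hU, hU0, fun U' hU'U hU' => or_iff_not_imp_left.mpr fun hU'0 => ?_⟩
  exact hU'U.eq_of_not_lt (hmin U' ⟨hU'U.trans hUS, hU', hU'0⟩)

lemma RepIsoExt.exists_intertwiningMap_range_eq {U : Submodule ℂ V} (hU : Invt ρ U)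
    (he : RepIsoExt ρ ρP U) : ∃ f : ρP.IntertwiningMap ρ, LinearMap.range f.toLinearMap = U := by
  obtain ⟨e, he⟩ := he
  have hesymm : ∀ h p, e.symm (ρP h p) = ⟨ρ h (e.symm p), hU h _ (e.symm p).2⟩ := fun h p => by
    rw [LinearEquiv.symm_apply_eq, he _ _ (e.symm p).2, Subtype.coe_eta,
      LinearEquiv.apply_symm_apply]
  refine ⟨(U.subtype ∘ₗ e.symm.toLinearMap).intertwiningMap_of_isIntertwiningMap _ _
    fun h p => by simp [hesymm], ?_⟩
  change LinearMap.range (U.subtype ∘ₗ e.symm.toLinearMap) = U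
  rw [LinearMap.range_comp, LinearEquiv.range, Submodule.map_top, Submodule.range_subtype]

theorem iSup_range_intertwiningMap_eq_top [FiniteDimensional ℂ V] (hss : Semisimple ρ)
    (hisot : ∀ U, IrredSub ρ U → RepIsoExt ρ ρP U) :
    ⨆ f : ρP.IntertwiningMap ρ, LinearMap.range f.toLinearMap = ⊤ := by
  set S := ⨆ f : ρP.IntertwiningMap ρ, LinearMap.range f.toLinearMap
  have hS : Invt ρ S := fun h v hv => by
    refine Submodule.iSup_induction _ (motive := fun v => ρ h v ∈ S) hv ?_ ?_ ?_
    · exact fun f v hv => Submodule.mem_iSup_of_mem f (f.range.apply_mem_toSubmodule h hv)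
    · simp
    · exact fun v w hv hw => by rw [map_add]; exact add_mem hv hw
  obtain ⟨S', hS', hSS'⟩ := hss S hS
  by_contra hne
  obtain ⟨U, hUS', hU⟩ := exists_irredSub_le hS' fun h => hne (by simpa [h] using hSS'.sup_eq_top)
  obtain ⟨f, hf⟩ := (hisot U hU).exists_intertwiningMap_range_eq hU.1
  have hUS : U ≤ S := hf ▸ le_iSup (fun f : ρP.IntertwiningMap ρ => LinearMap.range f.toLinearMap) f
  exact hU.2.1 (le_bot_iff.mp (hSS'.disjoint hUS hUS'))

theorem hasDiagonalModel [FiniteDimensional ℂ V] [FiniteDimensional ℂ P]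
    (hσ : σ = RingHom.id ℂ ∨ σ = starRingEnd ℂ) (hε : ε = 1 ∨ ε = -1)
    (hP : ∀ U, Invt ρP U → U = ⊥ ∨ U = ⊤) (hb : IsInvariantEpsForm ρP ε b)
    (hgen : ⨆ f : ρP.IntertwiningMap ρ, LinearMap.range f.toLinearMap = ⊤)
    (hB : IsInvariantEpsForm ρ ε B) :
    HasDiagonalModel ρ ρP B b := by
  induction hn : finrank ℂ V using Nat.strong_induction_on generalizing V with
  | _ n ih =>
  rcases subsingleton_or_nontrivial V with _ | _
  · exact .of_subsingleton
  obtain ⟨f, d, hd, hfB⟩ := exists_pullback_self_eq_ofReal hσ hε hP hb hgen hB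
  have : Nontrivial P := by
    obtain ⟨f, g, p, q, hpq⟩ := exists_pullback_pair_ne_zero hgen hB.separatingLeft
    exact ⟨⟨p, 0, by rintro rfl; simp at hpq⟩⟩
  have hd' : (d : ℂ) ≠ 0 := by exact_mod_cast hd
  set W := leftOrthogonal hB.invariant f
  have hf := injective_of_pullback_eq_mul hb.separatingLeft hd' hfB
  have hfW : IsCompl _ W.toSubmodule := isCompl_range_ker_compl₂ hσ hb.separatingLeft hd' hfB
  have hBWf : ∀ p, ∀ w ∈ W.toSubmodule, B w (f p) = 0 := fun p w hw => mem_leftOrthogonal.mp hw p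
  have hBfW : ∀ p, ∀ w ∈ W.toSubmodule, B (f p) w = 0 := fun p w hw => by
    rw [hB.eps_symm, hBWf p w hw, map_zero, mul_zero]
  have hWinv : Invt ρ (LinearMap.range f.toLinearMap) := fun h _ hv =>
    f.range.apply_mem_toSubmodule h hv
  refine .of_isCompl hf hd hfB hfW hBfW hBWf (ih _ ?_ ?_ ⟨?_, ?_, ?_⟩ rfl)
  · exact hn ▸ finrank_lt_of_isCompl_range hf hfW
  · exact iSup_range_intertwiningMap_eq_top_of_isCompl hgen W hWinv hfW.symm
  · exact separatingLeft_domRestrict₁₂ hB.separatingLeft hfW fun w hw u ⟨p, hp⟩ =>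
      hp ▸ hBWf p w hw
  · exact fun h v w => hB.invariant h v w
  · exact fun v w => hB.eps_symm v w

end Forms

theorem stmt_8_general [Group H] [AddCommGroup V] [Module ℂ V] [FiniteDimensional ℂ V]
    [AddCommGroup P] [Module ℂ P] [FiniteDimensional ℂ P]
    (σ : ℂ →+* ℂ) (hσ : σ = RingHom.id ℂ ∨ σ = starRingEnd ℂ)
    (ε : ℂ) (hε : ε = 1 ∨ ε = -1)
    (ρ : Representation ℂ H V) (hss : Semisimple ρ)
    (ρP : Representation ℂ H P)
    (hPirr : ∀ U : Submodule ℂ P, (∀ (h : H) (v : P), v ∈ U → ρP h v ∈ U) →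
      U = ⊥ ∨ U = ⊤)
    -- V is isotypical of type π
    (hisot : ∀ U : Submodule ℂ V, IrredSub ρ U → RepIsoExt ρ ρP U)
    -- b is an invariant nondegenerate (ι,ε)-symmetric form on π
    (b : P → P → ℂ)
    (hb1 : ∀ v v' w, b (v + v') w = b v w + b v' w)
    (hb2 : ∀ v w w', b v (w + w') = b v w + b v w')
    (hb3 : ∀ (a : ℂ) (v w : P), b (a • v) w = σ a * b v w)
    (hb4 : ∀ (a : ℂ) (v w : P), b v (a • w) = a * b v w)
    (hbinv : ∀ (h : H) (v w : P), b (ρP h v) (ρP h w) = b v w)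
    (hbsym : ∀ v w, b w v = ε * σ (b v w))
    (hbnd : ∀ v, (∀ w, b v w = 0) → v = 0)
    -- B is an invariant nondegenerate (ι,ε)-symmetric form on V
    (B : V → V → ℂ)
    (hB1 : ∀ v v' w, B (v + v') w = B v w + B v' w)
    (hB2 : ∀ v w w', B v (w + w') = B v w + B v w')
    (hB3 : ∀ (a : ℂ) (v w : V), B (a • v) w = σ a * B v w)
    (hB4 : ∀ (a : ℂ) (v w : V), B v (a • w) = a * B v w)
    (hBinv : ∀ (h : H) (v w : V), B (ρ h v) (ρ h w) = B v w)
    (hBsym : ∀ v w, B w v = ε * σ (B v w))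
    (hBnd : ∀ v, (∀ w, B v w = 0) → v = 0) :
    ∃ (r : ℕ) (d : Fin r → ℝ), (∀ i, d i ≠ 0) ∧
      ∃ Φ : V ≃ₗ[ℂ] (Fin r → P),
        -- Φ is H-equivariant for the diagonal action on π^{⊕r}
        (∀ (h : H) (v : V) (i : Fin r), Φ (ρ h v) i = ρP h (Φ v i)) ∧
        -- Φ carries B to the orthogonal direct sum of the forms d_i·b
        (∀ v w : V, B v w = ∑ i, (d i : ℂ) * b (Φ v i) (Φ w i)) := by
  let bₗ : P →ₛₗ[σ] P →ₗ[ℂ] ℂ := LinearMap.mk₂'ₛₗ σ (RingHom.id ℂ) b hb1 hb3 hb2 hb4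
  let Bₗ : V →ₛₗ[σ] V →ₗ[ℂ] ℂ := LinearMap.mk₂'ₛₗ σ (RingHom.id ℂ) B hB1 hB3 hB2 hB4
  exact hasDiagonalModel (B := Bₗ) (b := bₗ) hσ hε hPirr ⟨hbnd, hbinv, hbsym⟩
    (iSup_range_intertwiningMap_eq_top hss hisot) ⟨hBnd, hBinv, hBsym⟩

/-- Let `(V,B)` be an isotypical `H`-module of type `π` with an invariant
nondegenerate `(ι,ε)`-symmetric form, where `π` itself carries an invariant nondegenerate
`(ι,ε)`-symmetric form `b`. Then `(V,B)` is `H`-equivariantly isometric to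
`(π ⊗ ℂ^r, b ⊗ D)` for some invertible real diagonal matrix `D`, i.e. to the orthogonal
direct sum of the modules `(π, d_i·b)`. -/
theorem stmt_8 [Group H] [AddCommGroup V] [Module ℂ V] [FiniteDimensional ℂ V]
    [AddCommGroup P] [Module ℂ P] [FiniteDimensional ℂ P]
    (σ : ℂ →+* ℂ) (hσ : σ = RingHom.id ℂ ∨ σ = starRingEnd ℂ)
    (ε : ℂ) (hε : ε = 1 ∨ ε = -1)
    (ρ : Representation ℂ H V) (hss : Semisimple ρ)
    (ρP : Representation ℂ H P)
    (hPss : ∀ U : Submodule ℂ P, (∀ (h : H) (v : P), v ∈ U → ρP h v ∈ U) →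
      ∃ U', (∀ (h : H) (v : P), v ∈ U' → ρP h v ∈ U') ∧ IsCompl U U')
    (hPirr : ∀ U : Submodule ℂ P, (∀ (h : H) (v : P), v ∈ U → ρP h v ∈ U) →
      U = ⊥ ∨ U = ⊤)
    -- V is isotypical of type π
    (hisot : ∀ U : Submodule ℂ V, IrredSub ρ U → RepIsoExt ρ ρP U)
    -- b is an invariant nondegenerate (ι,ε)-symmetric form on π
    (b : P → P → ℂ)
    (hb1 : ∀ v v' w, b (v + v') w = b v w + b v' w)
    (hb2 : ∀ v w w', b v (w + w') = b v w + b v w')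
    (hb3 : ∀ (a : ℂ) (v w : P), b (a • v) w = σ a * b v w)
    (hb4 : ∀ (a : ℂ) (v w : P), b v (a • w) = a * b v w)
    (hbinv : ∀ (h : H) (v w : P), b (ρP h v) (ρP h w) = b v w)
    (hbsym : ∀ v w, b w v = ε * σ (b v w))
    (hbnd : ∀ v, (∀ w, b v w = 0) → v = 0)
    -- B is an invariant nondegenerate (ι,ε)-symmetric form on V
    (B : V → V → ℂ)
    (hB1 : ∀ v v' w, B (v + v') w = B v w + B v' w)
    (hB2 : ∀ v w w', B v (w + w') = B v w + B v w')
    (hB3 : ∀ (a : ℂ) (v w : V), B (a • v) w = σ a * B v w)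
    (hB4 : ∀ (a : ℂ) (v w : V), B v (a • w) = a * B v w)
    (hBinv : ∀ (h : H) (v w : V), B (ρ h v) (ρ h w) = B v w)
    (hBsym : ∀ v w, B w v = ε * σ (B v w))
    (hBnd : ∀ v, (∀ w, B v w = 0) → v = 0) :
    ∃ (r : ℕ) (d : Fin r → ℝ), (∀ i, d i ≠ 0) ∧
      ∃ Φ : V ≃ₗ[ℂ] (Fin r → P),
        -- Φ is H-equivariant for the diagonal action on π^{⊕r}
        (∀ (h : H) (v : V) (i : Fin r), Φ (ρ h v) i = ρP h (Φ v i)) ∧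
        -- Φ carries B to the orthogonal direct sum of the forms d_i·b
        (∀ v w : V, B v w = ∑ i, (d i : ℂ) * b (Φ v i) (Φ w i)) :=
  stmt_8_general σ hσ ε hε ρ hss ρP hPirr hisot b hb1 hb2 hb3 hb4 hbinv hbsym hbnd B hB1 hB2 hB3 hB4
    hBinv hBsym hBnd
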